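/- arXiv:2104.00535 — 2 statements merged into one kernel-verified Lean document; each statement's English description precedes it below -/
import Mathlib

section
/- Let G = (V, A) be a finite directed graph, k ∈ V, and υ: A → ℝ_{≥0} a flow such that for every vertex i ≠ k, (outflow of i) − (inflow of i) ≥ 1. Then from every vertex i ∈ V there exists a directed path to k using only arcs with strictly positive flow. -/
/-! Let `T` be the set of vertices from which `k` cannot be reached along positive-flow arcs.
No positive flow leaves `T`, so the total net outflow of `T` is at most `0`: every unit of
flow leaving a vertex of `T` enters another vertex of `T`. As `k ∉ T`, every vertex of `T`
has net outflow at least `1`, hence `T` is empty. -/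

open Finset

section NetFlow

variable {V : Type*} [Fintype V]

theorem sum_netFlow_nonpos_of_forall_notMem (f : V → V → ℝ) (hf : ∀ i j, 0 ≤ f i j)
    (T : Finset V) (hT : ∀ i ∈ T, ∀ j ∉ T, f i j = 0) :
    ∑ i ∈ T, (∑ j, f i j - ∑ j, f j i) ≤ 0 := by
  have hout : ∀ i ∈ T, ∑ j, f i j = ∑ j ∈ T, f i j := fun i hi =>
    (sum_subset (subset_univ T) fun j _ hj => hT i hi j hj).symm
  have hin : ∀ i, ∑ j ∈ T, f j i ≤ ∑ j, f j i := fun i =>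
    sum_le_sum_of_subset_of_nonneg (subset_univ T) fun j _ _ => hf j i
  calc ∑ i ∈ T, (∑ j, f i j - ∑ j, f j i)
      ≤ ∑ i ∈ T, (∑ j ∈ T, f i j - ∑ j ∈ T, f j i) :=
        sum_le_sum fun i hi => by rw [hout i hi]; exact sub_le_sub_left (hin i) _
    _ = 0 := by rw [sum_sub_distrib, sum_comm, sub_self]

theorem reflTransGen_of_one_le_netFlow (f : V → V → ℝ) (hf : ∀ i j, 0 ≤ f i j) (k : V)
    (hflow : ∀ i, i ≠ k → 1 ≤ ∑ j, f i j - ∑ j, f j i) (i : V) :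
    Relation.ReflTransGen (fun a b => 0 < f a b) i k := by
  classical
  set T := univ.filter fun v => ¬Relation.ReflTransGen (fun a b => 0 < f a b) v k
  have hT : ∀ i ∈ T, ∀ j ∉ T, f i j = 0 := by
    intro i hi j hj
    simp only [T, mem_filter, mem_univ, true_and, not_not] at hi hj
    by_contra hne
    exact hi (.head ((hf i j).lt_of_ne' hne) hj)
  have hkT : k ∉ T := by simp [T, Relation.ReflTransGen.refl]
  by_contra hik
  have hiT : i ∈ T := by simp [T, hik]
  have hpos : 0 < ∑ v ∈ T, (∑ j, f v j - ∑ j, f j v) :=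
    sum_pos (fun v hv => one_pos.trans_le (hflow v (ne_of_mem_of_not_mem hv hkT))) ⟨i, hiT⟩
  exact (sum_netFlow_nonpos_of_forall_notMem f hf T hT).not_gt hpos

end NetFlow

open scoped Classical in
theorem positive_flow_path_to_sink {V : Type*} [Fintype V]
    (A : Finset (V × V)) (k : V) (υ : V × V → ℝ)
    (hnn : ∀ e, 0 ≤ υ e)
    (hflow : ∀ i, i ≠ k →
      (∑ j ∈ Finset.univ.filter (fun j => (i, j) ∈ A), υ (i, j)) -
        (∑ l ∈ Finset.univ.filter (fun l => (l, i) ∈ A), υ (l, i)) ≥ 1) :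
    ∀ i : V, Relation.ReflTransGen (fun a b => (a, b) ∈ A ∧ 0 < υ (a, b)) i k := by
  intro i
  let f : V → V → ℝ := fun a b => if (a, b) ∈ A then υ (a, b) else 0
  have hf : ∀ a b, 0 ≤ f a b := fun a b => by
    simp only [f]; split_ifs <;> simp [hnn]
  have hflow' : ∀ i, i ≠ k → 1 ≤ ∑ j, f i j - ∑ j, f j i := fun i hi => by
    simpa only [f, ← sum_filter] using hflow i hi
  refine Relation.ReflTransGen.mono (fun a b hab => ?_) _ _
    (reflTransGen_of_one_le_netFlow f hf k hflow' i)
  by_cases hA : (a, b) ∈ A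
  · exact ⟨hA, by simpa [f, hA] using hab⟩
  · simp [f, hA] at hab
end

section
/- In the flow-based contiguity formulation, suppose for a zone k the constraints hold: for all i, Σ_j υ_{ijk} − Σ_l υ_{lik} ≥ d_{ik} − n_max h_{ik}; υ_{ijk} + υ_{jik} ≤ (n_max − 1) d_{ik} for all arcs (i,j); Σ_i h_{ik} = 1; h_{ik} ≤ d_{ik}; d, h binary; υ ≥ 0; and additionally υ_{ijk} + υ_{jik} ≤ (n_max − 1) d_{jk}. Then the set of beats assigned to zone k (those with d_{ik} = 1) induces a subgraph of the beat-adjacency graph in which every assigned beat has a directed positive-flow path to the unique sink beat of zone k; in particular the assigned set is connected in the underlying undirected adjacency graph. -/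
/-!
The sink is unique because the binary `h` sums to `1`. If an assigned beat `i` had no
positive-flow path to the sink `s`, let `S` be the set of beats reachable from `i` along
such paths. No flow leaves `S`, and flows between beats of `S` cancel in the total, so the
net outflow summed over `S` is `≤ 0`. But `s ∉ S`, so `h = 0` on `S` and the flow
constraints force that total to be at least `∑_{x ∈ S} d x ≥ d i = 1`.
Positive flow only runs between assigned beats thanks to the two capacity constraints.
-/

open Finset Relation

theorem existsUnique_eq_one_of_sum_eq_one {ι R : Type*} [Fintype ι] [AddCommMonoidWithOne R]
    [CharZero R] {f : ι → R} (hf : ∀ i, f i = 0 ∨ f i = 1) (hsum : ∑ i, f i = 1) :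
    ∃! i, f i = 1 := by
  classical
  have hcard : #(univ.filter fun i => f i = 1) = 1 := by
    have hboole : ∑ i, f i = ∑ i, if f i = 1 then (1 : R) else 0 :=
      sum_congr rfl fun i _ => by rcases hf i with h | h <;> simp [h]
    rw [hboole, sum_boole] at hsum
    exact_mod_cast hsum
  obtain ⟨s, hs⟩ := card_eq_one.mp hcard
  have hmem : ∀ t, f t = 1 ↔ t = s := by simpa using Finset.ext_iff.mp hs
  exact ⟨s, (hmem s).mpr rfl, fun t => (hmem t).mp⟩

theorem eq_one_of_pos_le_mul {R : Type*} [MulZeroOneClass R] [Preorder R] {x y c : R}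
    (hx : x = 0 ∨ x = 1) (hy : 0 < y) (hle : y ≤ c * x) : x = 1 :=
  hx.resolve_left fun h0 => (hy.trans_le (hle.trans_eq (by rw [h0, mul_zero]))).false

theorem reflTransGen_of_forall_exists_exit {α : Type*} {r : α → α → Prop} {a b : α}
    (h : ∀ S : Set α, a ∈ S → b ∉ S → ∃ x ∈ S, ∃ y ∉ S, r x y) :
    ReflTransGen r a b := by
  by_contra hab
  obtain ⟨x, hx, y, hy, hxy⟩ := h {c | ReflTransGen r a c} ReflTransGen.refl hab
  exact hy (ReflTransGen.tail hx hxy)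

section Flow

variable {I M : Type*} [Fintype I] [AddCommGroup M] [PartialOrder M] [IsOrderedAddMonoid M]

open scoped Classical in
noncomputable def netOutflow (𝓐 : Finset (I × I)) (υ : I → I → M) (i : I) : M :=
  ∑ j ∈ univ.filter (fun j => (i, j) ∈ 𝓐), υ i j -
    ∑ l ∈ univ.filter (fun l => (l, i) ∈ 𝓐), υ l i

theorem sum_netOutflow_nonpos {𝓐 : Finset (I × I)} {υ : I → I → M} {R : Finset I}
    (hυ : ∀ i j, 0 ≤ υ i j) (hR : ∀ a ∈ R, ∀ b ∉ R, (a, b) ∈ 𝓐 → υ a b = 0) :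
    ∑ x ∈ R, netOutflow 𝓐 υ x ≤ 0 := by
  classical
  set a : I → I → M := fun x j => if (x, j) ∈ 𝓐 then υ x j else 0
  have ha : ∀ x j, 0 ≤ a x j := fun x j => by
    by_cases hxj : (x, j) ∈ 𝓐 <;> simp [a, hxj, hυ]
  have hnet : ∀ x, netOutflow 𝓐 υ x = ∑ j, a x j - ∑ l, a l x := fun x => by
    simp only [netOutflow, sum_filter, a]
  have hout : ∀ x ∈ R, ∑ j, a x j = ∑ j ∈ R, a x j := fun x hx =>
    (sum_subset (subset_univ R) fun j _ hj => by
      by_cases hxj : (x, j) ∈ 𝓐 <;> simp [a, hxj, hR x hx j hj]).symm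
  have hin : ∀ x, ∑ l ∈ R, a l x ≤ ∑ l, a l x := fun x =>
    sum_le_sum_of_subset_of_nonneg (subset_univ R) fun l _ _ => ha l x
  calc ∑ x ∈ R, netOutflow 𝓐 υ x
      = ∑ x ∈ R, ∑ j ∈ R, a x j - ∑ x ∈ R, ∑ l, a l x := by
        rw [sum_congr rfl fun x _ => hnet x, sum_sub_distrib, sum_congr rfl hout]
    _ ≤ ∑ x ∈ R, ∑ j ∈ R, a x j - ∑ x ∈ R, ∑ l ∈ R, a l x :=
        sub_le_sub_left (sum_le_sum fun x _ => hin x) _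
    _ = 0 := by rw [sum_comm, sub_self]

theorem exists_pos_flow_out_of_pos_sum_netOutflow {𝓐 : Finset (I × I)} {υ : I → I → M}
    {R : Finset I} (hυ : ∀ i j, 0 ≤ υ i j) (hpos : 0 < ∑ x ∈ R, netOutflow 𝓐 υ x) :
    ∃ a ∈ R, ∃ b ∉ R, (a, b) ∈ 𝓐 ∧ 0 < υ a b := by
  by_contra! hno
  exact (sum_netOutflow_nonpos hυ fun a ha b hb hab =>
    ((hυ a b).eq_of_not_lt (hno a ha b hb hab)).symm).not_gt hpos

theorem reflTransGen_of_forall_sum_netOutflow_pos {𝓐 : Finset (I × I)} {υ : I → I → M}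
    {i t : I} (hυ : ∀ i j, 0 ≤ υ i j)
    (hS : ∀ S : Finset I, i ∈ S → t ∉ S → 0 < ∑ x ∈ S, netOutflow 𝓐 υ x) :
    ReflTransGen (fun a b => (a, b) ∈ 𝓐 ∧ 0 < υ a b) i t := by
  classical
  refine reflTransGen_of_forall_exists_exit fun S hiS htS => ?_
  obtain ⟨a, ha, b, hb, hab⟩ := exists_pos_flow_out_of_pos_sum_netOutflow hυ
    (hS S.toFinset (Set.mem_toFinset.mpr hiS) (mt Set.mem_toFinset.mp htS))
  exact ⟨a, Set.mem_toFinset.mp ha, b, mt Set.mem_toFinset.mpr hb, hab⟩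

end Flow

open scoped Classical in
theorem contiguity_constraints_imply_connectivity_general {I : Type*} [Fintype I]
    (𝓐 : Finset (I × I))
    (nmax : ℕ)
    (d h : I → ℝ) (υ : I → I → ℝ)
    (hd : ∀ i, d i = 0 ∨ d i = 1) (hh : ∀ i, h i = 0 ∨ h i = 1)
    (hυnn : ∀ i j, 0 ≤ υ i j)
    (hflow : ∀ i,
      (∑ j ∈ Finset.univ.filter (fun j => (i, j) ∈ 𝓐), υ i j) -
        (∑ l ∈ Finset.univ.filter (fun l => (l, i) ∈ 𝓐), υ l i) ≥
        d i - (nmax : ℝ) * h i)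
    (hcap : ∀ i j, (i, j) ∈ 𝓐 → υ i j + υ j i ≤ ((nmax : ℝ) - 1) * d i)
    (hcap' : ∀ i j, (i, j) ∈ 𝓐 → υ i j + υ j i ≤ ((nmax : ℝ) - 1) * d j)
    (hsink : ∑ i, h i = 1) :
    (∃! s, h s = 1) ∧
    ∀ s, h s = 1 → ∀ i, d i = 1 →
      Relation.ReflTransGen
        (fun a b => (a, b) ∈ 𝓐 ∧ d a = 1 ∧ d b = 1 ∧ 0 < υ a b) i s ∧
      Relation.ReflTransGen
        (fun a b => (a, b) ∈ 𝓐 ∧ d a = 1 ∧ d b = 1) i s := by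
  obtain ⟨s, hs, hs_uniq⟩ := existsUnique_eq_one_of_sum_eq_one hh hsink
  have hassigned : ∀ a b, (a, b) ∈ 𝓐 → 0 < υ a b → d a = 1 ∧ d b = 1 :=
    fun a b hab hpos =>
      have hle : υ a b ≤ υ a b + υ b a := le_add_of_nonneg_right (hυnn b a)
      ⟨eq_one_of_pos_le_mul (hd a) hpos (hle.trans (hcap a b hab)),
        eq_one_of_pos_le_mul (hd b) hpos (hle.trans (hcap' a b hab))⟩
  refine ⟨⟨s, hs, hs_uniq⟩, fun t ht i hi => ?_⟩
  obtain rfl := hs_uniq t ht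
  have hd_nonneg : ∀ x, 0 ≤ d x := fun x => by rcases hd x with hx | hx <;> simp [hx]
  have hflow_path : ReflTransGen (fun a b => (a, b) ∈ 𝓐 ∧ 0 < υ a b) i t := by
    refine reflTransGen_of_forall_sum_netOutflow_pos hυnn fun S hiS htS => ?_
    have hsupply : ∀ x ∈ S, d x - nmax * h x = d x := fun x hx => by
      have hxt : x ≠ t := by rintro rfl; exact htS hx
      rw [(hh x).resolve_right (hxt ∘ hs_uniq x), mul_zero, sub_zero]
    calc (0 : ℝ) < d i := hi ▸ one_pos
      _ ≤ ∑ x ∈ S, d x := single_le_sum (fun x _ => hd_nonneg x) hiS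
      _ = ∑ x ∈ S, (d x - nmax * h x) := (sum_congr rfl hsupply).symm
      _ ≤ ∑ x ∈ S, netOutflow 𝓐 υ x := sum_le_sum fun x _ => hflow x
  have hpath :
      ReflTransGen (fun a b => (a, b) ∈ 𝓐 ∧ d a = 1 ∧ d b = 1 ∧ 0 < υ a b) i t :=
    ReflTransGen.mono (fun a b ⟨hab, hpos⟩ => ⟨hab, (hassigned a b hab hpos).1,
      (hassigned a b hab hpos).2, hpos⟩) i t hflow_path
  exact ⟨hpath, ReflTransGen.mono (fun a b hab => ⟨hab.1, hab.2.1, hab.2.2.1⟩) i t hpath⟩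

open scoped Classical in
/-- Shirabe-style contiguity constraints imply that every beat assigned to zone `k`
has a directed positive-flow path to the unique sink of the zone, and hence the
assigned set is connected in the underlying undirected adjacency graph. -/
theorem contiguity_constraints_imply_connectivity {I : Type*} [Fintype I]
    (𝓐 : Finset (I × I)) (hsymm : ∀ i j, (i, j) ∈ 𝓐 → (j, i) ∈ 𝓐)
    (nmax : ℕ) (hnmax : 1 ≤ nmax)
    (d h : I → ℝ) (υ : I → I → ℝ)
    (hd : ∀ i, d i = 0 ∨ d i = 1) (hh : ∀ i, h i = 0 ∨ h i = 1)
    (hυnn : ∀ i j, 0 ≤ υ i j)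
    (hflow : ∀ i,
      (∑ j ∈ Finset.univ.filter (fun j => (i, j) ∈ 𝓐), υ i j) -
        (∑ l ∈ Finset.univ.filter (fun l => (l, i) ∈ 𝓐), υ l i) ≥
        d i - (nmax : ℝ) * h i)
    (hcap : ∀ i j, (i, j) ∈ 𝓐 → υ i j + υ j i ≤ ((nmax : ℝ) - 1) * d i)
    (hcap' : ∀ i j, (i, j) ∈ 𝓐 → υ i j + υ j i ≤ ((nmax : ℝ) - 1) * d j)
    (hsink : ∑ i, h i = 1)
    (hhd : ∀ i, h i ≤ d i) :
    (∃! s, h s = 1) ∧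
    ∀ s, h s = 1 → ∀ i, d i = 1 →
      Relation.ReflTransGen
        (fun a b => (a, b) ∈ 𝓐 ∧ d a = 1 ∧ d b = 1 ∧ 0 < υ a b) i s ∧
      Relation.ReflTransGen
        (fun a b => (a, b) ∈ 𝓐 ∧ d a = 1 ∧ d b = 1) i s :=
  contiguity_constraints_imply_connectivity_general 𝓐 nmax d h υ hd hh hυnn hflow hcap hcap' hsink
end
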